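/- Let s ≥ 0 be an integer. Suppose f, g ∈ H^s(ℝ) and γ ∈ W^{s+1,∞}(ℝ). Then for X = εx with 0 < ε < 1, |(f(·), γ(ε·)g(·))_{H^s} − (g(·), γ(ε·)f(·))_{H^s}| ≤ C ε ‖f‖_{H^s} ‖g‖_{H^s} ‖γ‖_{W^{s,∞}}. -/

import Mathlib

open MeasureTheory Real

/-- The `H^s(ℝ)` Sobolev inner product (integer `s`). -/
noncomputable def Hinner (s : ℕ) (f g : ℝ → ℝ) : ℝ :=
  ∑ j ∈ Finset.range (s + 1), ∫ x : ℝ, iteratedDeriv j f x * iteratedDeriv j g x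

/-- The `H^s(ℝ)` Sobolev norm (integer `s`). -/
noncomputable def Hnorm (s : ℕ) (f : ℝ → ℝ) : ℝ :=
  Real.sqrt (∑ j ∈ Finset.range (s + 1), ∫ x : ℝ, (iteratedDeriv j f x) ^ 2)

lemma hcs_iteratedDeriv {f : ℝ → ℝ} (hf : HasCompactSupport f) (k : ℕ) :
    HasCompactSupport (iteratedDeriv k f) := by
  rw [iteratedDeriv_eq_iterate]
  induction k with
  | zero => simpa using hf
  | succ n ih => rw [Function.iterate_succ_apply']; exact ih.deriv

lemma leibniz {f g : ℝ → ℝ} (hf : ContDiff ℝ (⊤ : ℕ∞) f) (hg : ContDiff ℝ (⊤ : ℕ∞) g) (n : ℕ) :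
    iteratedDeriv n (fun x => f x * g x) = fun x =>
      ∑ k ∈ Finset.range (n + 1),
        (n.choose k : ℝ) * iteratedDeriv k f x * iteratedDeriv (n - k) g x := by
  have hdf : ∀ k, Differentiable ℝ (iteratedDeriv k f) := fun k =>
    hf.differentiable_iteratedDeriv k (by exact_mod_cast ENat.coe_lt_top k)
  have hdg : ∀ k, Differentiable ℝ (iteratedDeriv k g) := fun k =>
    hg.differentiable_iteratedDeriv k (by exact_mod_cast ENat.coe_lt_top k)
  induction n with
  | zero => simp
  | succ n ih =>
    funext x
    rw [iteratedDeriv_succ, ih]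
    have hdiff : ∀ k ∈ Finset.range (n + 1), DifferentiableAt ℝ
        (fun y => (n.choose k : ℝ) * iteratedDeriv k f y * iteratedDeriv (n - k) g y) x :=
      fun k _ => (((hdf k).const_mul _).mul (hdg (n - k))).differentiableAt
    rw [deriv_fun_sum hdiff]
    have hterm : ∀ k ∈ Finset.range (n + 1),
        deriv (fun y => (n.choose k : ℝ) * iteratedDeriv k f y * iteratedDeriv (n - k) g y) x
          = (n.choose k : ℝ) * iteratedDeriv (k+1) f x * iteratedDeriv (n - k) g x
            + (n.choose k : ℝ) * iteratedDeriv k f x * iteratedDeriv (n - k + 1) g x := by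
      intro k _
      have h1 : (fun y => (n.choose k : ℝ) * iteratedDeriv k f y * iteratedDeriv (n - k) g y)
          = fun y => (n.choose k : ℝ) * (iteratedDeriv k f y * iteratedDeriv (n - k) g y) := by
        funext y; ring
      rw [h1, deriv_const_mul _ (show
          DifferentiableAt ℝ (fun y => iteratedDeriv k f y * iteratedDeriv (n - k) g y) x from
          ((hdf k).mul (hdg (n-k))).differentiableAt),
        deriv_fun_mul ((hdf k).differentiableAt) ((hdg (n-k)).differentiableAt),
        ← iteratedDeriv_succ, ← iteratedDeriv_succ]
      ring
    rw [Finset.sum_congr rfl hterm, Finset.sum_add_distrib]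
    have e2 : ∑ k ∈ Finset.range (n + 1),
        (n.choose k : ℝ) * iteratedDeriv k f x * iteratedDeriv (n - k + 1) g x
        = ∑ k ∈ Finset.range (n + 1),
          (n.choose k : ℝ) * iteratedDeriv k f x * iteratedDeriv (n + 1 - k) g x := by
      refine Finset.sum_congr rfl fun k hk => ?_
      rw [Finset.mem_range] at hk
      congr 2
      omega
    rw [e2]
    have e8 : ∑ k ∈ Finset.range (n + 1),
        (n.choose k : ℝ) * iteratedDeriv k f x * iteratedDeriv (n + 1 - k) g x
        = ∑ k ∈ Finset.range n,
            (n.choose (k+1) : ℝ) * iteratedDeriv (k+1) f x * iteratedDeriv (n - k) g x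
          + iteratedDeriv 0 f x * iteratedDeriv (n + 1) g x := by
      rw [Finset.sum_range_succ' (fun k => (n.choose k : ℝ) * iteratedDeriv k f x *
        iteratedDeriv (n + 1 - k) g x) n]
      congr 1
      · refine Finset.sum_congr rfl fun k hk => ?_
        rw [Finset.mem_range] at hk
        congr 2
        omega
      · simp
    have e9 : ∑ k ∈ Finset.range (n + 1 + 1),
        ((n+1).choose k : ℝ) * iteratedDeriv k f x * iteratedDeriv (n + 1 - k) g x
        = ∑ k ∈ Finset.range (n + 1),
            ((n+1).choose (k+1) : ℝ) * iteratedDeriv (k+1) f x * iteratedDeriv (n - k) g x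
          + iteratedDeriv 0 f x * iteratedDeriv (n + 1) g x := by
      rw [Finset.sum_range_succ' (fun k => ((n+1).choose k : ℝ) * iteratedDeriv k f x *
        iteratedDeriv (n + 1 - k) g x) (n+1)]
      congr 1
      · refine Finset.sum_congr rfl fun k hk => ?_
        congr 2
        omega
      · simp
    have e10 : ∑ k ∈ Finset.range (n + 1),
        ((n+1).choose (k+1) : ℝ) * iteratedDeriv (k+1) f x * iteratedDeriv (n - k) g x
        = ∑ k ∈ Finset.range (n + 1),
            (n.choose k : ℝ) * iteratedDeriv (k+1) f x * iteratedDeriv (n - k) g x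
          + ∑ k ∈ Finset.range (n + 1),
            (n.choose (k+1) : ℝ) * iteratedDeriv (k+1) f x * iteratedDeriv (n - k) g x := by
      rw [← Finset.sum_add_distrib]
      refine Finset.sum_congr rfl fun k _ => ?_
      rw [Nat.choose_succ_succ]
      push_cast
      ring
    have e11 : ∑ k ∈ Finset.range (n + 1),
        (n.choose (k+1) : ℝ) * iteratedDeriv (k+1) f x * iteratedDeriv (n - k) g x
        = ∑ k ∈ Finset.range n,
          (n.choose (k+1) : ℝ) * iteratedDeriv (k+1) f x * iteratedDeriv (n - k) g x := by
      rw [Finset.sum_range_succ]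
      simp
    rw [e8, e9, e10, e11]
    ring

lemma cs {u v : ℝ → ℝ} (hu : Continuous u) (hcu : HasCompactSupport u)
    (hv : Continuous v) (hcv : HasCompactSupport v) :
    ∫ x : ℝ, |u x| * |v x| ≤
      Real.sqrt (∫ x : ℝ, u x ^ 2) * Real.sqrt (∫ x : ℝ, v x ^ 2) := by
  have h2 : (2:ℝ).HolderConjugate 2 := Real.HolderConjugate.two_two
  have hmu : MemLp u (ENNReal.ofReal 2) volume := hu.memLp_of_hasCompactSupport hcu
  have hmv : MemLp v (ENNReal.ofReal 2) volume := hv.memLp_of_hasCompactSupport hcv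
  have := integral_mul_le_Lp_mul_Lq_of_nonneg h2
    (f := fun x => |u x|) (g := fun x => |v x|)
    (Filter.Eventually.of_forall fun x => abs_nonneg _)
    (Filter.Eventually.of_forall fun x => abs_nonneg _) hmu.abs hmv.abs
  have eu : ∫ (a : ℝ), |u a| ^ (2:ℝ) = ∫ x : ℝ, u x ^ 2 := by
    refine integral_congr_ae (Filter.Eventually.of_forall fun x => ?_)
    show |u x| ^ (2:ℝ) = u x ^ 2
    rw [show ((2:ℝ) = ((2:ℕ):ℝ)) by norm_num, Real.rpow_natCast, sq_abs]
  have ev : ∫ (a : ℝ), |v a| ^ (2:ℝ) = ∫ x : ℝ, v x ^ 2 := by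
    refine integral_congr_ae (Filter.Eventually.of_forall fun x => ?_)
    show |v x| ^ (2:ℝ) = v x ^ 2
    rw [show ((2:ℝ) = ((2:ℕ):ℝ)) by norm_num, Real.rpow_natCast, sq_abs]
  rw [eu, ev] at this
  calc ∫ x : ℝ, |u x| * |v x| ≤
      (∫ x : ℝ, u x ^ 2) ^ (1/2:ℝ) * (∫ x : ℝ, v x ^ 2) ^ (1/2:ℝ) := this
    _ = Real.sqrt (∫ x : ℝ, u x ^ 2) * Real.sqrt (∫ x : ℝ, v x ^ 2) := by
        rw [Real.sqrt_eq_rpow, Real.sqrt_eq_rpow]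

/-- for `f, g ∈ H^s`, `γ ∈ W^{s+1,∞}` (encoded by a uniform bound `M` on the
first `s+1` derivatives of `γ`, standing for `‖γ‖_{W^{s,∞}}`), and `0 < ε < 1`,
`|(f, γ(ε·)g)_{H^s} − (g, γ(ε·)f)_{H^s}| ≤ C ε ‖f‖_{H^s} ‖g‖_{H^s} M`. -/
theorem commutator_estimate (s : ℕ) :
    ∃ C : ℝ, ∀ (f g γ : ℝ → ℝ) (M : ℝ),
      ContDiff ℝ (⊤ : ℕ∞) f → HasCompactSupport f →
      ContDiff ℝ (⊤ : ℕ∞) g → HasCompactSupport g →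
      ContDiff ℝ (⊤ : ℕ∞) γ →
      (∀ j ≤ s + 1, ∀ x : ℝ, |iteratedDeriv j γ x| ≤ M) →
      ∀ ε : ℝ, 0 < ε → ε < 1 →
        |Hinner s f (fun x => γ (ε * x) * g x) - Hinner s g (fun x => γ (ε * x) * f x)|
          ≤ C * ε * Hnorm s f * Hnorm s g * M := by
  refine ⟨(s + 1 : ℝ) * 2 ^ (s + 1), ?_⟩
  intro f g γ M hf hfc hg hgc hγ hM ε hε0 hε1
  have hM0 : 0 ≤ M := le_trans (abs_nonneg _) (hM 0 (by omega) 0)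
  have hγε : ContDiff ℝ (⊤ : ℕ∞) (fun x : ℝ => γ (ε * x)) :=
    hγ.comp (contDiff_const.mul contDiff_id)
  have hγεk : ∀ k : ℕ, iteratedDeriv k (fun x : ℝ => γ (ε * x))
      = fun x => ε ^ k * iteratedDeriv k γ (ε * x) := fun k =>
    iteratedDeriv_comp_const_mul (hγ.of_le (by exact_mod_cast le_top)) ε
  have hGc : ∀ k : ℕ, Continuous (fun x : ℝ => iteratedDeriv k γ (ε * x)) := fun k =>
    (hγ.continuous_iteratedDeriv k (by exact_mod_cast le_top)).comp (continuous_const.mul continuous_id)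
  -- integrability of the basic integrands
  have hint : ∀ (k j m : ℕ) (u v : ℝ → ℝ), ContDiff ℝ (⊤ : ℕ∞) u → HasCompactSupport u →
      ContDiff ℝ (⊤ : ℕ∞) v →
      Integrable (fun x : ℝ =>
        iteratedDeriv k γ (ε * x) * iteratedDeriv j u x * iteratedDeriv m v x) volume := by
    intro k j m u v hu hcu hv
    have hcsupp : HasCompactSupport (fun x : ℝ =>
        iteratedDeriv k γ (ε * x) * iteratedDeriv j u x) :=
      HasCompactSupport.mul_left (hcs_iteratedDeriv hcu j)
    have hcsupp2 : HasCompactSupport (fun x : ℝ =>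
        iteratedDeriv k γ (ε * x) * iteratedDeriv j u x * iteratedDeriv m v x) :=
      hcsupp.mul_right
    exact (((hGc k).mul (hu.continuous_iteratedDeriv j (by exact_mod_cast le_top))).mul
      (hv.continuous_iteratedDeriv m (by exact_mod_cast le_top))).integrable_of_hasCompactSupport hcsupp2
  -- expansion of the inner product
  have expand : ∀ (u v : ℝ → ℝ), ContDiff ℝ (⊤ : ℕ∞) u → HasCompactSupport u →
      ContDiff ℝ (⊤ : ℕ∞) v → HasCompactSupport v →
      Hinner s u (fun x => γ (ε * x) * v x)
        = ∑ j ∈ Finset.range (s + 1), ∑ k ∈ Finset.range (j + 1),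
            (j.choose k : ℝ) * ε ^ k *
              ∫ x : ℝ, iteratedDeriv k γ (ε * x) * iteratedDeriv j u x *
                iteratedDeriv (j - k) v x := by
    intro u v hu hcu hv hcv
    unfold Hinner
    refine Finset.sum_congr rfl fun j _ => ?_
    have hexp : (fun x => iteratedDeriv j u x * iteratedDeriv j (fun y => γ (ε * y) * v y) x)
        = fun x => ∑ k ∈ Finset.range (j + 1), (j.choose k : ℝ) * ε ^ k *
            (iteratedDeriv k γ (ε * x) * iteratedDeriv j u x * iteratedDeriv (j - k) v x) := by
      funext x
      rw [leibniz hγε hv j]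
      rw [Finset.mul_sum]
      refine Finset.sum_congr rfl fun k _ => ?_
      rw [show iteratedDeriv k (fun y : ℝ => γ (ε * y)) x
          = ε ^ k * iteratedDeriv k γ (ε * x) from congrFun (hγεk k) x]
      ring
    rw [hexp, integral_finset_sum _ (fun k _ => ((hint k j (j - k) u v hu hcu hv).const_mul _))]
    exact Finset.sum_congr rfl fun k _ => integral_const_mul _ _
  -- single-term L² bound
  have hHle : ∀ (j : ℕ), j ≤ s → ∀ u : ℝ → ℝ,
      Real.sqrt (∫ x : ℝ, iteratedDeriv j u x ^ 2) ≤ Hnorm s u := by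
    intro j hj u
    apply Real.sqrt_le_sqrt
    exact Finset.single_le_sum (f := fun i => ∫ x : ℝ, iteratedDeriv i u x ^ 2)
      (fun i _ => integral_nonneg fun x => sq_nonneg _) (Finset.mem_range.mpr (by omega))
  have hH0 : ∀ u : ℝ → ℝ, 0 ≤ Hnorm s u := fun u => Real.sqrt_nonneg _
  -- the basic integral bound
  have hibound : ∀ (k j m : ℕ), k ≤ s + 1 → j ≤ s → m ≤ s →
      ∀ (u v : ℝ → ℝ), ContDiff ℝ (⊤ : ℕ∞) u → HasCompactSupport u →
        ContDiff ℝ (⊤ : ℕ∞) v → HasCompactSupport v →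
      |∫ x : ℝ, iteratedDeriv k γ (ε * x) * iteratedDeriv j u x * iteratedDeriv m v x|
        ≤ M * (Hnorm s u * Hnorm s v) := by
    intro k j m hk hj hm u v hu hcu hv hcv
    have habs : |∫ x : ℝ, iteratedDeriv k γ (ε * x) * iteratedDeriv j u x * iteratedDeriv m v x|
        ≤ ∫ x : ℝ, |iteratedDeriv k γ (ε * x) * iteratedDeriv j u x * iteratedDeriv m v x| := by
      simpa only [Real.norm_eq_abs] using norm_integral_le_integral_norm (μ := volume)
        (fun x : ℝ => iteratedDeriv k γ (ε * x) * iteratedDeriv j u x * iteratedDeriv m v x)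
    have hintuv : Integrable (fun x : ℝ => |iteratedDeriv j u x| * |iteratedDeriv m v x|) volume := by
      have : Integrable (fun x : ℝ => iteratedDeriv j u x * iteratedDeriv m v x) volume := by
        have hcsupp : HasCompactSupport (fun x : ℝ =>
            iteratedDeriv j u x * iteratedDeriv m v x) :=
          (hcs_iteratedDeriv hcu j).mul_right
        exact ((hu.continuous_iteratedDeriv j (by exact_mod_cast le_top)).mul
          (hv.continuous_iteratedDeriv m (by exact_mod_cast le_top))).integrable_of_hasCompactSupport hcsupp
      simpa [abs_mul] using this.abs
    have hmono : ∫ x : ℝ, |iteratedDeriv k γ (ε * x) * iteratedDeriv j u x * iteratedDeriv m v x|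
        ≤ ∫ x : ℝ, M * (|iteratedDeriv j u x| * |iteratedDeriv m v x|) := by
      refine integral_mono_of_nonneg (Filter.Eventually.of_forall fun x => abs_nonneg _)
        (hintuv.const_mul M) (Filter.Eventually.of_forall fun x => ?_)
      dsimp only
      rw [abs_mul, abs_mul]
      have := hM k hk (ε * x)
      have h1 : |iteratedDeriv k γ (ε * x)| * |iteratedDeriv j u x| ≤ M * |iteratedDeriv j u x| :=
        mul_le_mul_of_nonneg_right this (abs_nonneg _)
      calc |iteratedDeriv k γ (ε * x)| * |iteratedDeriv j u x| * |iteratedDeriv m v x|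
          ≤ M * |iteratedDeriv j u x| * |iteratedDeriv m v x| :=
            mul_le_mul_of_nonneg_right h1 (abs_nonneg _)
        _ = M * (|iteratedDeriv j u x| * |iteratedDeriv m v x|) := by ring
    have hcs2 : ∫ x : ℝ, |iteratedDeriv j u x| * |iteratedDeriv m v x|
        ≤ Real.sqrt (∫ x : ℝ, iteratedDeriv j u x ^ 2) *
          Real.sqrt (∫ x : ℝ, iteratedDeriv m v x ^ 2) :=
      cs (hu.continuous_iteratedDeriv j (by exact_mod_cast le_top)) (hcs_iteratedDeriv hcu j)
        (hv.continuous_iteratedDeriv m (by exact_mod_cast le_top)) (hcs_iteratedDeriv hcv m)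
    calc |∫ x : ℝ, iteratedDeriv k γ (ε * x) * iteratedDeriv j u x * iteratedDeriv m v x|
        ≤ ∫ x : ℝ, |iteratedDeriv k γ (ε * x) * iteratedDeriv j u x * iteratedDeriv m v x| := habs
      _ ≤ ∫ x : ℝ, M * (|iteratedDeriv j u x| * |iteratedDeriv m v x|) := hmono
      _ = M * ∫ x : ℝ, |iteratedDeriv j u x| * |iteratedDeriv m v x| := integral_const_mul _ _
      _ ≤ M * (Real.sqrt (∫ x : ℝ, iteratedDeriv j u x ^ 2) *
            Real.sqrt (∫ x : ℝ, iteratedDeriv m v x ^ 2)) :=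
          mul_le_mul_of_nonneg_left hcs2 hM0
      _ ≤ M * (Hnorm s u * Hnorm s v) := by
          refine mul_le_mul_of_nonneg_left ?_ hM0
          exact mul_le_mul (hHle j hj u) (hHle m hm v) (Real.sqrt_nonneg _) (hH0 u)
  -- put it together
  rw [expand f g hf hfc hg hgc, expand g f hg hgc hf hfc, ← Finset.sum_sub_distrib]
  set K : ℝ := 2 * (M * (Hnorm s f * Hnorm s g)) with hK
  have hK0 : 0 ≤ K := by rw [hK]; exact mul_nonneg (by norm_num) (mul_nonneg hM0 (mul_nonneg (hH0 f) (hH0 g)))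
  have hjbound : ∀ j ∈ Finset.range (s + 1),
      |∑ k ∈ Finset.range (j + 1),
          (j.choose k : ℝ) * ε ^ k *
            (∫ x : ℝ, iteratedDeriv k γ (ε * x) * iteratedDeriv j f x * iteratedDeriv (j - k) g x)
        - ∑ k ∈ Finset.range (j + 1),
          (j.choose k : ℝ) * ε ^ k *
            (∫ x : ℝ, iteratedDeriv k γ (ε * x) * iteratedDeriv j g x * iteratedDeriv (j - k) f x)|
        ≤ 2 ^ s * (ε * K) := by
    intro j hj
    rw [Finset.mem_range] at hj
    have hjs : j ≤ s := by omega
    rw [← Finset.sum_sub_distrib]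
    have hterm : ∀ k ∈ Finset.range (j + 1),
        |(j.choose k : ℝ) * ε ^ k *
            (∫ x : ℝ, iteratedDeriv k γ (ε * x) * iteratedDeriv j f x * iteratedDeriv (j - k) g x)
          - (j.choose k : ℝ) * ε ^ k *
            (∫ x : ℝ, iteratedDeriv k γ (ε * x) * iteratedDeriv j g x * iteratedDeriv (j - k) f x)|
          ≤ (j.choose k : ℝ) * (ε * K) := by
      intro k hk
      rw [Finset.mem_range] at hk
      rcases Nat.eq_zero_or_pos k with hk0 | hk1
      · subst hk0
        have : (∫ x : ℝ, iteratedDeriv 0 γ (ε * x) * iteratedDeriv j f x * iteratedDeriv (j - 0) g x)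
            = ∫ x : ℝ, iteratedDeriv 0 γ (ε * x) * iteratedDeriv j g x * iteratedDeriv (j - 0) f x := by
          refine integral_congr_ae (Filter.Eventually.of_forall fun x => ?_)
          simp only [Nat.sub_zero]
          ring
        rw [this, sub_self, abs_zero]
        exact mul_nonneg (by positivity) (mul_nonneg hε0.le hK0)
      · rw [← mul_sub, abs_mul, abs_mul]
        have h1 : |(j.choose k : ℝ)| = (j.choose k : ℝ) := abs_of_nonneg (by positivity)
        have h2 : |ε ^ k| = ε ^ k := abs_of_nonneg (by positivity)
        rw [h1, h2]
        have hI1 := hibound k j (j - k) (by omega) hjs (by omega) f g hf hfc hg hgc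
        have hI2 := hibound k j (j - k) (by omega) hjs (by omega) g f hg hgc hf hfc
        have hsub : |(∫ x : ℝ, iteratedDeriv k γ (ε * x) * iteratedDeriv j f x * iteratedDeriv (j - k) g x)
            - ∫ x : ℝ, iteratedDeriv k γ (ε * x) * iteratedDeriv j g x * iteratedDeriv (j - k) f x| ≤ K := by
          calc _ ≤ |∫ x : ℝ, iteratedDeriv k γ (ε * x) * iteratedDeriv j f x * iteratedDeriv (j - k) g x|
              + |∫ x : ℝ, iteratedDeriv k γ (ε * x) * iteratedDeriv j g x * iteratedDeriv (j - k) f x| :=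
              abs_sub _ _
            _ ≤ M * (Hnorm s f * Hnorm s g) + M * (Hnorm s g * Hnorm s f) := add_le_add hI1 hI2
            _ = K := by rw [hK]; ring
        have hεk : ε ^ k ≤ ε := by
          calc ε ^ k ≤ ε ^ 1 := pow_le_pow_of_le_one hε0.le hε1.le hk1
            _ = ε := pow_one ε
        have step1 : (j.choose k : ℝ) * ε ^ k *
            |(∫ x : ℝ, iteratedDeriv k γ (ε * x) * iteratedDeriv j f x * iteratedDeriv (j - k) g x)
              - ∫ x : ℝ, iteratedDeriv k γ (ε * x) * iteratedDeriv j g x * iteratedDeriv (j - k) f x|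
            ≤ (j.choose k : ℝ) * ε ^ k * K :=
          mul_le_mul_of_nonneg_left hsub (by positivity)
        refine le_trans step1 ?_
        have step2 : ε ^ k * K ≤ ε * K := mul_le_mul_of_nonneg_right hεk hK0
        calc (j.choose k : ℝ) * ε ^ k * K = (j.choose k : ℝ) * (ε ^ k * K) := by ring
          _ ≤ (j.choose k : ℝ) * (ε * K) :=
            mul_le_mul_of_nonneg_left step2 (by positivity)
    refine le_trans (le_trans (Finset.abs_sum_le_sum_abs _ _) (Finset.sum_le_sum hterm)) ?_
    have hsum : ∑ k ∈ Finset.range (j + 1), (j.choose k : ℝ) * (ε * K)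
        = (2 : ℝ) ^ j * (ε * K) := by
      rw [← Finset.sum_mul]
      congr 1
      norm_cast
      exact Nat.sum_range_choose j
    rw [hsum]
    refine mul_le_mul_of_nonneg_right ?_ (mul_nonneg hε0.le hK0)
    exact pow_le_pow_right₀ (by norm_num) hjs
  refine le_trans (le_trans (Finset.abs_sum_le_sum_abs _ _) (Finset.sum_le_sum hjbound)) ?_
  rw [Finset.sum_const, Finset.card_range]
  apply le_of_eq
  rw [nsmul_eq_mul, hK]
  push_cast
  ring
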